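/- arXiv:2605.26804 — 5 statements merged into one kernel-verified Lean document; each statement's English description precedes it below -/
import Mathlib

section
/- For every p ∈ (0,1), the infimum of I_Cr^p over [0,1] equals (1/2)·log(1/(4p(1-p))) if p ≤ 1/2, and equals 0 if p > 1/2. -/
/-- The Cramér rate function of a biased Rademacher distribution with parameter `p`. -/
noncomputable def ICr (p x : ℝ) : ℝ :=
  (1 - x) / 2 * Real.log ((1 - x) / (2 * (1 - p)))
    + (1 + x) / 2 * Real.log ((1 + x) / (2 * p))

lemma ICr_key (a q : ℝ) (ha : 0 ≤ a) (hq : 0 < q) : a - q ≤ a * Real.log (a / q) := by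
  rcases ha.eq_or_lt with h | h
  · simp [← h]; linarith
  · have h1 : Real.log (q / a) ≤ q / a - 1 := Real.log_le_sub_one_of_pos (by positivity)
    have h2 : Real.log (a / q) = - Real.log (q / a) := by
      rw [← Real.log_inv]; congr 1; field_simp
    have h3 : a * Real.log (q / a) ≤ a * (q / a - 1) :=
      mul_le_mul_of_nonneg_left h1 h.le
    have h4 : a * (q / a - 1) = q - a := by field_simp
    rw [h2]; nlinarith

lemma ICr_half (c a : ℝ) (ha : 0 ≤ a) (hc : 0 < c) :
    a - 1 / 2 - a * Real.log (2 * c) ≤ a * Real.log (a / c) := by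
  rcases ha.eq_or_lt with h | h
  · simp [← h]
  · have h1 := ICr_key a (1 / 2) ha one_half_pos
    have e1 : Real.log (a / (1 / 2)) = Real.log a + Real.log 2 := by
      rw [Real.log_div (ne_of_gt h) (by norm_num)]
      simp [Real.log_div]
    have e2 : Real.log (2 * c) = Real.log 2 + Real.log c :=
      Real.log_mul two_ne_zero (ne_of_gt hc)
    have e3 : Real.log (a / c) = Real.log a - Real.log c :=
      Real.log_div (ne_of_gt h) (ne_of_gt hc)
    rw [e1] at h1
    rw [e2, e3]
    nlinarith

lemma ICr_nonneg (p x : ℝ) (hp0 : 0 < p) (hp1 : p < 1) (hx0 : -1 ≤ x) (hx1 : x ≤ 1) :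
    0 ≤ ICr p x := by
  have k1 := ICr_key ((1 - x) / 2) (1 - p) (by linarith) (by linarith)
  have k2 := ICr_key ((1 + x) / 2) p (by linarith) hp0
  have e1 : (1 - x) / (2 * (1 - p)) = ((1 - x) / 2) / (1 - p) := (div_div _ _ _).symm
  have e2 : (1 + x) / (2 * p) = ((1 + x) / 2) / p := (div_div _ _ _).symm
  unfold ICr
  rw [e1, e2]
  linarith

lemma ICr_lb (p x : ℝ) (hp0 : 0 < p) (hp1 : p < 1) (hx0 : -1 ≤ x) (hx1 : x ≤ 1) :
    -((1 - x) / 2) * Real.log (2 * (1 - p)) - (1 + x) / 2 * Real.log (2 * p) ≤ ICr p x := by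
  have k1 := ICr_half (1 - p) ((1 - x) / 2) (by linarith) (by linarith)
  have k2 := ICr_half p ((1 + x) / 2) (by linarith) hp0
  have e1 : (1 - x) / (2 * (1 - p)) = ((1 - x) / 2) / (1 - p) := (div_div _ _ _).symm
  have e2 : (1 + x) / (2 * p) = ((1 + x) / 2) / p := (div_div _ _ _).symm
  unfold ICr
  rw [e1, e2]
  linarith

theorem ICr_inf_right (p : ℝ) (hp : p ∈ Set.Ioo (0 : ℝ) 1) :
    sInf (ICr p '' Set.Icc (0 : ℝ) 1)
      = if p ≤ 1 / 2 then 1 / 2 * Real.log (1 / (4 * p * (1 - p))) else 0 := by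
  obtain ⟨hp0, hp1⟩ := hp
  have h2p : (0 : ℝ) < 2 * p := by linarith
  have h2q : (0 : ℝ) < 2 * (1 - p) := by linarith
  by_cases hple : p ≤ 1 / 2
  · rw [if_pos hple]
    have hlog : Real.log (1 / (4 * p * (1 - p)))
        = -(Real.log (2 * (1 - p)) + Real.log (2 * p)) := by
      rw [show (1 : ℝ) / (4 * p * (1 - p)) = (2 * (1 - p) * (2 * p))⁻¹ by
        rw [inv_eq_one_div]; ring_nf, Real.log_inv,
        Real.log_mul (ne_of_gt h2q) (ne_of_gt h2p)]
    apply IsLeast.csInf_eq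
    constructor
    · refine ⟨0, ⟨le_refl 0, by norm_num⟩, ?_⟩
      unfold ICr
      rw [hlog]
      rw [show (1 - (0:ℝ)) / (2 * (1 - p)) = (2 * (1 - p))⁻¹ by rw [inv_eq_one_div]; ring_nf,
          show (1 + (0:ℝ)) / (2 * p) = (2 * p)⁻¹ by rw [inv_eq_one_div]; ring_nf,
          Real.log_inv, Real.log_inv]
      ring
    · rintro y ⟨x, ⟨hx0, hx1⟩, rfl⟩
      have hlb := ICr_lb p x hp0 hp1 (by linarith) hx1
      have hmono : Real.log (2 * p) ≤ Real.log (2 * (1 - p)) :=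
        Real.log_le_log h2p (by linarith)
      rw [hlog]
      nlinarith
  · rw [if_neg hple]
    push_neg at hple
    apply IsLeast.csInf_eq
    constructor
    · refine ⟨2 * p - 1, ⟨by linarith, by linarith⟩, ?_⟩
      unfold ICr
      rw [show (1 - (2 * p - 1)) / (2 * (1 - p)) = 1 by
            rw [div_eq_one_iff_eq (ne_of_gt h2q)]; ring,
          show (1 + (2 * p - 1)) / (2 * p) = 1 by
            rw [div_eq_one_iff_eq (ne_of_gt h2p)]; ring,
          Real.log_one]
      ring
    · rintro y ⟨x, ⟨hx0, hx1⟩, rfl⟩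
      exact ICr_nonneg p x hp0 hp1 (by linarith) hx1
end

section
/- For every p ∈ (0,1), the infimum of I_Cr^p over [-1,0] equals (1/2)·log(1/(4p(1-p))) if p ≥ 1/2, and equals 0 if p < 1/2. -/
/-!
`ICr p x` is the relative entropy of the Bernoulli law with parameter `(1 + x) / 2` with respect
to that with parameter `p`, so it is nonnegative on `[-1, 1]` and vanishes at the mean `2p - 1`.
For `p < 1/2` the mean lies in `[-1, 0]`, so the infimum is `0`. For `p ≥ 1/2`, `ICr p` differs
from the nonnegative `ICr (1/2)` by an affine function whose slope `(1/2) log ((1 - p) / p)` is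
nonpositive, so on `[-1, 0]` the minimum is attained at `0`.
-/

open Real Set

lemma csInf_image_eq_of_forall_le {α β : Type*} [ConditionallyCompleteLattice β] {f : α → β}
    {s : Set α} {a : α} (ha : a ∈ s) (hmin : ∀ x ∈ s, f a ≤ f x) : sInf (f '' s) = f a :=
  IsLeast.csInf_eq ⟨mem_image_of_mem f ha, forall_mem_image.2 hmin⟩

lemma sub_le_mul_log_div {a b : ℝ} (ha : 0 ≤ a) (hb : 0 < b) : a - b ≤ a * log (a / b) := by
  rcases ha.eq_or_lt with rfl | ha
  · simpa using hb.le
  have hlog : 1 - b / a ≤ log (a / b) := by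
    simpa only [inv_div] using one_sub_inv_le_log_of_pos (div_pos ha hb)
  calc a - b = a * (1 - b / a) := by field_simp
    _ ≤ a * log (a / b) := mul_le_mul_of_nonneg_left hlog ha.le

lemma mul_log_div_eq {a b c : ℝ} (hb : b ≠ 0) (hc : a = 0 → c = 0) :
    c * log (a / b) = c * log a - c * log b := by
  rcases eq_or_ne a 0 with ha | ha
  · simp [hc ha]
  · rw [log_div ha hb]; ring

section

variable {p x : ℝ}

lemma ICr_nonneg_s4 (hp : p ∈ Ioo 0 1) (hx : x ∈ Icc (-1) 1) : 0 ≤ ICr p x := by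
  obtain ⟨hp0, hp1⟩ := hp
  have hl := sub_le_mul_log_div (a := (1 - x) / 2) (b := 1 - p) (by linarith [hx.2]) (by linarith)
  have hr := sub_le_mul_log_div (a := (1 + x) / 2) (b := p) (by linarith [hx.1]) hp0
  rw [div_div] at hl hr
  rw [ICr]
  linarith

lemma ICr_eq_ICr_half_sub (hp0 : p ≠ 0) (hp1 : p ≠ 1) :
    ICr p x = ICr (1 / 2) x - ((1 - x) / 2 * log (2 * (1 - p)) + (1 + x) / 2 * log (2 * p)) := by
  have h1p : 2 * (1 - p) ≠ 0 := by intro h; apply hp1; linarith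
  have hhalf : 2 * (1 - 1 / 2 : ℝ) = 1 ∧ 2 * (1 / 2 : ℝ) = 1 := by norm_num
  simp only [ICr, hhalf, div_one]
  rw [mul_log_div_eq h1p fun h ↦ by simp [h],
    mul_log_div_eq (mul_ne_zero two_ne_zero hp0) fun h ↦ by simp [h]]
  ring

lemma ICr_zero (hp0 : p ≠ 0) (hp1 : p ≠ 1) :
    ICr p 0 = 1 / 2 * log (1 / (4 * p * (1 - p))) := by
  have h1p : 1 - p ≠ 0 := sub_ne_zero.2 hp1.symm
  norm_num only [ICr, sub_zero, add_zero]
  rw [← mul_add, ← log_mul (by positivity) (by positivity)]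
  congr 2
  field_simp
  ring

lemma ICr_two_mul_sub_one (hp0 : p ≠ 0) (hp1 : p ≠ 1) : ICr p (2 * p - 1) = 0 := by
  have h1p : 1 - p ≠ 0 := sub_ne_zero.2 hp1.symm
  have hl : (1 - (2 * p - 1)) / (2 * (1 - p)) = 1 := by field_simp; ring
  have hr : (1 + (2 * p - 1)) / (2 * p) = 1 := by field_simp; ring
  rw [ICr, hl, hr]
  simp

lemma ICr_zero_le (hp : 1 / 2 ≤ p) (hp1 : p < 1) (hx : x ∈ Icc (-1) 0) : ICr p 0 ≤ ICr p x := by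
  have hp0 : p ≠ 0 := by positivity
  rw [ICr_eq_ICr_half_sub hp0 hp1.ne, ICr_eq_ICr_half_sub hp0 hp1.ne]
  have hhalf_zero : ICr (1 / 2) 0 = 0 := by simpa using ICr_two_mul_sub_one (p := 1 / 2)
  have hhalf_nonneg : 0 ≤ ICr (1 / 2) x := ICr_nonneg_s4 (by norm_num) ⟨hx.1, hx.2.trans zero_le_one⟩
  have hslope : log (2 * (1 - p)) ≤ log (2 * p) := log_le_log (by linarith) (by linarith)
  linarith [mul_nonneg_of_nonpos_of_nonpos hx.2 (sub_nonpos.2 hslope)]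

end

theorem ICr_inf_left (p : ℝ) (hp : p ∈ Set.Ioo (0 : ℝ) 1) :
    sInf (ICr p '' Set.Icc (-1 : ℝ) 0)
      = if 1 / 2 ≤ p then 1 / 2 * Real.log (1 / (4 * p * (1 - p))) else 0 := by
  obtain ⟨hp0, hp1⟩ := hp
  split_ifs with hp_half
  · refine (csInf_image_eq_of_forall_le (by norm_num) fun x hx ↦ ?_).trans
      (ICr_zero hp0.ne' hp1.ne)
    exact ICr_zero_le hp_half hp1 hx
  · have hmean : 2 * p - 1 ∈ Icc (-1 : ℝ) 0 := ⟨by linarith, by linarith⟩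
    refine (csInf_image_eq_of_forall_le hmean fun x hx ↦ ?_).trans
      (ICr_two_mul_sub_one hp0.ne' hp1.ne)
    rw [ICr_two_mul_sub_one hp0.ne' hp1.ne]
    exact ICr_nonneg_s4 ⟨hp0, hp1⟩ ⟨hx.1, hx.2.trans zero_le_one⟩
end

section
/- The function α ↦ min{(1−α)·a, α·b}, for fixed a, b > 0, is concave on [0,1], vanishes at α = 0 and α = 1, and is strictly positive for α ∈ (0,1). In particular, the rate function I restricted to the segment of measures (1−α)δ_{−∞} + α δ_{+∞}, given by I((1−α)δ_{−∞}+αδ_{+∞}) = min{(1−α)·I_Cr^{p_−}(0), α·I_Cr^{p_+}(0)} with p_− < 1/2 < p_+, is concave and non-convex on its effective domain. -/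
theorem min_affine_concave_nonconvex (a b : ℝ) (ha : 0 < a) (hb : 0 < b) :
    ConcaveOn ℝ (Set.Icc (0 : ℝ) 1) (fun α => min ((1 - α) * a) (α * b)) ∧
    min ((1 - (0 : ℝ)) * a) ((0 : ℝ) * b) = 0 ∧
    min ((1 - (1 : ℝ)) * a) ((1 : ℝ) * b) = 0 ∧
    (∀ α ∈ Set.Ioo (0 : ℝ) 1, 0 < min ((1 - α) * a) (α * b)) ∧
    ¬ ConvexOn ℝ (Set.Icc (0 : ℝ) 1) (fun α => min ((1 - α) * a) (α * b)) := by
  have h1 : ConcaveOn ℝ (Set.Icc (0 : ℝ) 1) (fun α => (1 - α) * a) :=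
    ⟨convex_Icc 0 1, by intro x _ y _ s t hs ht hst; simp only [smul_eq_mul]; nlinarith⟩
  have h2 : ConcaveOn ℝ (Set.Icc (0 : ℝ) 1) (fun α => α * b) :=
    ⟨convex_Icc 0 1, by intro x _ y _ s t hs ht hst; simp only [smul_eq_mul]; nlinarith⟩
  have hconc := h1.inf h2
  refine ⟨hconc, by simp [ha.le], by simp [hb.le], ?_, ?_⟩
  · rintro α ⟨h0, h1'⟩
    exact lt_min (mul_pos (by linarith) ha) (mul_pos h0 hb)
  · intro hconv
    have := hconv.2 (Set.mem_Icc.2 ⟨le_refl (0:ℝ), zero_le_one⟩)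
      (Set.mem_Icc.2 ⟨zero_le_one, le_refl (1:ℝ)⟩)
      (by norm_num : (0:ℝ) ≤ 1/2) (by norm_num : (0:ℝ) ≤ 1/2) (by norm_num)
    simp at this
    rw [min_eq_right ha.le, min_eq_left hb.le] at this
    rcases this with h | h <;> linarith
end

section
/- Let (S_n) be a simple random walk on ℤ with transition probability function p satisfying 0 < p(k) < 1 for all k and p(k) → p₊ ∈ (0,1) as k → +∞. Then the sequence of empirical measures ℓ_n = (1/n)∑_{j=1}^n δ_{S_j}, viewed in P(ℤ) with the weak topology, is not exponentially tight: for every compact K ⊆ P(ℤ), lim inf_{n→∞} (1/n) log P(ℓ_n ∉ K) ≥ log p₊ > −∞. -/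
/-!
A compact set `K` of probability measures on `ℤ` has uniformly heavy atoms: there is `N` such
that every `ν ∈ K` charges some point with mass more than `1/N` (the sets
`{ν | ∃ x, 1/N < ν {x}}` are open, increase with `N` and cover `P(ℤ)`). On the event that the
walk moves straight up, `S_j = j - 1` for `j ≤ n`, the path visits `n` distinct points, so every
atom of `ℓ_n` has mass `1/n`, and `ℓ_n ∉ K` once `n ≥ N`. This event has probability
`∏_{k < n - 1} p(k)`, whose exponential rate is `log p₊` by Cesàro.
-/

open MeasureTheory Filter Topology Finset
open scoped NNReal ENNReal

/-- The empirical measure `ℓ_n = (1/n) ∑_{j=1}^n δ_{S_j}` of the process `S`,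
as a measure on `ℤ`. -/
noncomputable def empiricalMeasure {Ω : Type*} (S : ℕ → Ω → ℤ) (n : ℕ) (ω : Ω) :
    Measure ℤ :=
  ((n : ENNReal))⁻¹ • ∑ j ∈ Finset.Icc 1 n, Measure.dirac (S j ω)

section Atoms

variable {X : Type*} [MeasurableSpace X]

theorem ProbabilityMeasure.exists_measure_singleton_ne_zero [Countable X]
    (ν : ProbabilityMeasure X) : ∃ x, (ν : Measure X) {x} ≠ 0 := by
  by_contra! h
  have huniv : (ν : Measure X) Set.univ = 0 := by
    rw [← Set.iUnion_of_singleton X]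
    exact measure_iUnion_null h
  simp at huniv

variable [TopologicalSpace X] [DiscreteTopology X] [OpensMeasurableSpace X]
  [HasOuterApproxClosed X]

theorem ProbabilityMeasure.continuous_measure_singleton (x : X) :
    Continuous fun ν : ProbabilityMeasure X => (ν : Measure X) {x} := by
  simp_rw [← ProbabilityMeasure.ennreal_coeFn_eq_coeFn_toMeasure]
  exact ENNReal.continuous_coe.comp <| continuous_iff_continuousAt.2 fun _ =>
    ProbabilityMeasure.tendsto_measure_of_isClopen_of_tendsto tendsto_id (isClopen_discrete _)

theorem IsCompact.exists_inv_nat_lt_measure_singleton [Countable X]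
    {K : Set (ProbabilityMeasure X)} (hK : IsCompact K) :
    ∃ N : ℕ, ∀ ν ∈ K, ∃ x, (N : ℝ≥0∞)⁻¹ < (ν : Measure X) {x} := by
  let U : ℕ → Set (ProbabilityMeasure X) :=
    fun N => ⋃ x, {ν | (N : ℝ≥0∞)⁻¹ < (ν : Measure X) {x}}
  have hU_open : ∀ N, IsOpen (U N) := fun N => isOpen_iUnion fun x =>
    isOpen_lt continuous_const (ProbabilityMeasure.continuous_measure_singleton x)
  have hU_cover : K ⊆ ⋃ N, U N := fun ν _ => by
    obtain ⟨x, hx⟩ := ProbabilityMeasure.exists_measure_singleton_ne_zero ν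
    obtain ⟨N, hN⟩ := ENNReal.exists_inv_nat_lt hx
    exact Set.mem_iUnion.2 ⟨N, Set.mem_iUnion.2 ⟨x, hN⟩⟩
  have hU_mono : Monotone U := fun M N hMN =>
    Set.iUnion_mono fun x ν hν =>
      lt_of_le_of_lt (ENNReal.inv_le_inv.2 (by exact_mod_cast hMN)) hν
  obtain ⟨N, hN⟩ := hK.elim_directed_cover U hU_open hU_cover hU_mono.directed_le
  exact ⟨N, fun ν hν => by simpa [U] using hN hν⟩

end Atoms

theorem Filter.Tendsto.cesaro_Ico_one {u : ℕ → ℝ} {L : ℝ} (h : Tendsto u atTop (𝓝 L)) :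
    Tendsto (fun n : ℕ => (n : ℝ)⁻¹ * ∑ j ∈ Ico 1 n, u j) atTop (𝓝 L) := by
  have hfirst : Tendsto (fun n : ℕ => (n : ℝ)⁻¹ * u 0) atTop (𝓝 0) := by
    simpa using tendsto_inv_atTop_nhds_zero_nat.mul_const (u 0)
  refine (sub_zero L ▸ h.cesaro.sub hfirst).congr' ?_
  filter_upwards [eventually_ge_atTop 1] with n hn
  rw [range_eq_Ico, sum_eq_sum_Ico_succ_bot hn]
  ring

section Walk

variable {Ω : Type*}

theorem empiricalMeasure_singleton_le (S : ℕ → Ω → ℤ) (n : ℕ) (ω : Ω)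
    (hS : Set.InjOn (S · ω) (Icc 1 n : Set ℕ)) (x : ℤ) :
    empiricalMeasure S n ω {x} ≤ (n : ℝ≥0∞)⁻¹ := by
  have hvisits : ∑ j ∈ Icc 1 n, Measure.dirac (S j ω) {x} ≤ 1 := by
    simp only [Measure.dirac_apply, Set.indicator_apply, Set.mem_singleton_iff, Pi.one_apply,
      sum_boole]
    refine Nat.cast_le_one.2 (card_le_one.2 fun i hi j hj => ?_)
    rw [mem_filter, mem_coe.symm] at hi hj
    exact hS hi.1 hj.1 (hi.2.trans hj.2.symm)
  calc empiricalMeasure S n ω {x}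
      = (n : ℝ≥0∞)⁻¹ * ∑ j ∈ Icc 1 n, Measure.dirac (S j ω) {x} := by
        simp [empiricalMeasure]
    _ ≤ (n : ℝ≥0∞)⁻¹ * 1 := by gcongr
    _ = (n : ℝ≥0∞)⁻¹ := mul_one _

def IsSimpleRandomWalk [MeasurableSpace Ω] (P : Measure Ω) (p : ℤ → ℝ) (S : ℕ → Ω → ℤ) :
    Prop :=
  ∀ n : ℕ, 1 ≤ n → ∀ w : ℕ → ℤ, w 1 = 0 →
    (∀ j, 1 ≤ j → j < n → (w (j + 1) - w j = 1 ∨ w (j + 1) - w j = -1)) →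
    P {ω | ∀ j, 1 ≤ j → j ≤ n → S j ω = w j}
      = ENNReal.ofReal (∏ j ∈ Finset.Ico 1 n,
          if w (j + 1) = w j + 1 then p (w j) else 1 - p (w j))

def straightUpEvent (S : ℕ → Ω → ℤ) (n : ℕ) : Set Ω :=
  {ω | ∀ j, 1 ≤ j → j ≤ n → S j ω = (j : ℤ) - 1}

theorem IsSimpleRandomWalk.measure_straightUpEvent [MeasurableSpace Ω] {P : Measure Ω}
    {p : ℤ → ℝ} {S : ℕ → Ω → ℤ} (hS : IsSimpleRandomWalk P p S) {n : ℕ} (hn : 1 ≤ n) :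
    P (straightUpEvent S n) = ENNReal.ofReal (∏ j ∈ Ico 1 n, p ((j : ℤ) - 1)) := by
  refine (hS n hn (fun j => (j : ℤ) - 1) (by simp)
    fun j _ _ => Or.inl (by push_cast; ring)).trans ?_
  congr 1
  exact prod_congr rfl fun j _ => if_pos (by push_cast; ring)

theorem straightUpEvent_subset_empiricalMeasure_ne {S : ℕ → Ω → ℤ}
    {K : Set (ProbabilityMeasure ℤ)} {N n : ℕ}
    (hK : ∀ ν ∈ K, ∃ x, (N : ℝ≥0∞)⁻¹ < (ν : Measure ℤ) {x}) (hn : N ≤ n) :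
    straightUpEvent S n ⊆ {ω | ∀ ν ∈ K, (ν : Measure ℤ) ≠ empiricalMeasure S n ω} := by
  intro ω hω ν hν hνω
  obtain ⟨x, hx⟩ := hK ν hν
  have hinj : Set.InjOn (S · ω) (Icc 1 n : Set ℕ) := fun i hi j hj hij => by
    simp only [coe_Icc, Set.mem_Icc] at hi hj
    have := hω i hi.1 hi.2
    have := hω j hj.1 hj.2
    simp only at hij
    omega
  have hsmall : (ν : Measure ℤ) {x} ≤ (N : ℝ≥0∞)⁻¹ :=
    calc (ν : Measure ℤ) {x}
        ≤ (n : ℝ≥0∞)⁻¹ := hνω ▸ empiricalMeasure_singleton_le S n ω hinj x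
      _ ≤ (N : ℝ≥0∞)⁻¹ := ENNReal.inv_le_inv.2 (by exact_mod_cast hn)
  exact hsmall.not_gt hx

theorem IsSimpleRandomWalk.sum_log_le_log_measure [MeasurableSpace Ω] {P : Measure Ω}
    [IsFiniteMeasure P] {p : ℤ → ℝ} (hp : ∀ k, 0 < p k) {S : ℕ → Ω → ℤ}
    (hS : IsSimpleRandomWalk P p S) {n : ℕ} {E : Set Ω} (hE : straightUpEvent S n ⊆ E)
    (hn : 1 ≤ n) :
    ∑ j ∈ Ico 1 n, Real.log (p ((j : ℤ) - 1)) ≤ Real.log (P E).toReal := by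
  have hprod : 0 < ∏ j ∈ Ico 1 n, p ((j : ℤ) - 1) := prod_pos fun j _ => hp _
  rw [← Real.log_prod fun j _ => (hp _).ne']
  refine Real.log_le_log hprod ?_
  calc ∏ j ∈ Ico 1 n, p ((j : ℤ) - 1) = (P (straightUpEvent S n)).toReal := by
        rw [hS.measure_straightUpEvent hn, ENNReal.toReal_ofReal hprod.le]
    _ ≤ (P E).toReal := ENNReal.toReal_mono (measure_ne_top P E) (measure_mono hE)

end Walk

/-- No exponential tightness of the empirical measures of a spatially inhomogeneous simple
random walk on `ℤ` (with the topology of weak convergence on `P(ℤ)`): for every compact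
`K ⊆ P(ℤ)`, `lim inf (1/n) log P(ℓ_n ∉ K) ≥ log p₊`. -/
theorem no_exponential_tightness
    {Ω : Type*} [MeasurableSpace Ω] (P : Measure Ω) [IsProbabilityMeasure P]
    (p : ℤ → ℝ) (hp : ∀ k, p k ∈ Set.Ioo (0 : ℝ) 1)
    (pplus : ℝ) (hpplus : pplus ∈ Set.Ioo (0 : ℝ) 1)
    (hlim : Tendsto p atTop (nhds pplus))
    (S : ℕ → Ω → ℤ)
    (hpath : ∀ n : ℕ, 1 ≤ n → ∀ w : ℕ → ℤ, w 1 = 0 →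
      (∀ j, 1 ≤ j → j < n → (w (j + 1) - w j = 1 ∨ w (j + 1) - w j = -1)) →
      P {ω | ∀ j, 1 ≤ j → j ≤ n → S j ω = w j}
        = ENNReal.ofReal (∏ j ∈ Finset.Ico 1 n,
            if w (j + 1) = w j + 1 then p (w j) else 1 - p (w j))) :
    ∀ K : Set (ProbabilityMeasure ℤ), IsCompact K →
      Real.log pplus ≤ atTop.liminf (fun n : ℕ => (1 / (n : ℝ)) *
        Real.log (P {ω | ∀ ν : ProbabilityMeasure ℤ, ν ∈ K →
          (ν : Measure ℤ) ≠ empiricalMeasure S n ω}).toReal) := by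
  intro K hK
  set E : ℕ → Set Ω := fun n =>
    {ω | ∀ ν : ProbabilityMeasure ℤ, ν ∈ K → (ν : Measure ℤ) ≠ empiricalMeasure S n ω}
  obtain ⟨N, hN⟩ := hK.exists_inv_nat_lt_measure_singleton
  have hrate : Tendsto (fun n : ℕ => (n : ℝ)⁻¹ * ∑ j ∈ Ico 1 n, Real.log (p ((j : ℤ) - 1)))
      atTop (𝓝 (Real.log pplus)) :=
    Tendsto.cesaro_Ico_one <| (Real.continuousAt_log hpplus.1.ne').tendsto.comp <|
      hlim.comp <| tendsto_atTop_add_const_right _ (-1) tendsto_natCast_atTop_atTop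
  have hlower : ∀ᶠ n : ℕ in atTop, (n : ℝ)⁻¹ * ∑ j ∈ Ico 1 n, Real.log (p ((j : ℤ) - 1)) ≤
      1 / (n : ℝ) * Real.log (P (E n)).toReal := by
    filter_upwards [eventually_ge_atTop (max N 1)] with n hn
    rw [one_div]
    gcongr
    exact IsSimpleRandomWalk.sum_log_le_log_measure (fun k => (hp k).1) hpath
      (straightUpEvent_subset_empiricalMeasure_ne hN (le_of_max_le_left hn))
      (le_of_max_le_right hn)
  have hupper : ∀ n : ℕ, 1 / (n : ℝ) * Real.log (P (E n)).toReal ≤ 0 := fun n =>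
    mul_nonpos_of_nonneg_of_nonpos (by positivity)
      (Real.log_nonpos ENNReal.toReal_nonneg (measureReal_le_one ..))
  rw [← hrate.liminf_eq]
  exact liminf_le_liminf hlower hrate.isBoundedUnder_ge
    (isBoundedUnder_of ⟨0, hupper⟩).isCoboundedUnder_ge
end

section
/- No full LDP for empirical means of a bounded observable along a drifted walk: let (S_n) be the simple random walk on ℤ started at 0 with constant up-probability p̄ > 1/2. Define blocks by c₁=1, d_n=(n+1)c_n, c_{n+1}=d_n², and f = indicator of ∪_n ⟦c_n, d_n⟧. Then ℓ_n(f) = (1/n)∑_{j=1}^n f(S_j) satisfies: inf_{ε>0} lim sup_{n→∞} (1/n) log P(|ℓ_n(f)−1| < ε) = 0, while inf_{ε>0} lim inf_{n→∞} (1/n) log P(|ℓ_n(f)−1| < ε) ≤ −Λ*(0) < 0, where Λ* is the Fenchel–Legendre transform of log(p̄ e^λ + (1−p̄)e^{−λ}). Hence (ℓ_n(f)) satisfies no large deviation principle. -/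
open MeasureTheory Filter

/-- The block sequence `c₁ = 1`, `c_{n+1} = d_n² = ((n+1)·c_n)²`. -/
def cblock : ℕ → ℕ
  | 0 => 1
  | 1 => 1
  | (n + 2) => ((n + 2) * cblock (n + 1)) ^ 2

/-- The block sequence `d_n = (n+1)·c_n`. -/
def dblock (n : ℕ) : ℕ := (n + 1) * cblock n

open Classical in
/-- The bounded observable `f = 1_{∪_{n≥1} ⟦c_n, d_n⟧}`. -/
noncomputable def fobs (x : ℤ) : ℝ :=
  if ∃ n : ℕ, 1 ≤ n ∧ (cblock n : ℤ) ≤ x ∧ x ≤ (dblock n : ℤ) then 1 else 0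

/-! Along `n = d_k` the walk can climb straight to `c_k + r` (probability `p^(c_k + r)`, which is
`e^{o(d_k)}` because `c_k / d_k = 1/(k+1)`) and then, with probability at least `1/2`, never drop by
more than `r`; it then sits in `⟦c_k, d_k⟧` for all but the first `c_k + r` steps, so the lim sup
rate is `0`. Along `n = c_{k+1} = d_k²` the previous block ends at `d_k ≤ ε n`, so `ℓ_n(f) > 1 - ε`
forces the walk to have been below `d_k` within the last `εn + 1` steps, hence `S_n ≤ 3εn`, an event
whose probability is at most `e^{-n(Λ*(0) - O(ε))}` by the Chernoff bound. Finally
`Λ*(0) = -log (2 √(p(1-p))) > 0` by AM–GM. -/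

open ProbabilityTheory Finset Topology Real

lemma cblock_pos (n : ℕ) : 0 < cblock n := by
  induction n using cblock.induct <;> simp [cblock, *]

lemma cblock_succ {n : ℕ} (hn : 1 ≤ n) : cblock (n + 1) = dblock n ^ 2 := by
  obtain ⟨m, rfl⟩ := Nat.exists_eq_add_of_le' hn
  rfl

lemma cblock_le_dblock (n : ℕ) : cblock n ≤ dblock n :=
  Nat.le_mul_of_pos_left _ n.succ_pos

lemma dblock_le_cblock_succ (n : ℕ) : dblock n ≤ cblock (n + 1) := by
  rcases Nat.eq_zero_or_pos n with rfl | hn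
  · rfl
  · rw [cblock_succ hn]
    exact Nat.le_self_pow two_ne_zero _

lemma cblock_mono : Monotone cblock :=
  monotone_nat_of_le_succ fun n => (cblock_le_dblock n).trans (dblock_le_cblock_succ n)

lemma dblock_mono : Monotone dblock :=
  monotone_nat_of_le_succ fun n => Nat.mul_le_mul (Nat.le_succ _) (cblock_mono n.le_succ)

lemma succ_le_dblock (n : ℕ) : n + 1 ≤ dblock n :=
  Nat.le_mul_of_pos_right _ (cblock_pos n)

lemma dblock_pos (n : ℕ) : 0 < dblock n := n.succ_pos.trans_le (succ_le_dblock n)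

lemma tendsto_dblock_atTop : Tendsto dblock atTop atTop :=
  tendsto_atTop_mono succ_le_dblock (tendsto_add_atTop_nat 1)

lemma tendsto_cblock_succ_atTop : Tendsto (fun k => cblock (k + 1)) atTop atTop :=
  tendsto_atTop_mono (fun k => (succ_le_dblock k).trans (dblock_le_cblock_succ k))
    (tendsto_add_atTop_nat 1)

lemma eventually_one_le_mul_dblock {ε : ℝ} (hε : 0 < ε) :
    ∀ᶠ k in atTop, 1 ≤ ε * dblock k := by
  filter_upwards [(tendsto_natCast_atTop_atTop.comp tendsto_dblock_atTop).eventually_ge_atTop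
    (1 / ε)] with k hk
  rwa [div_le_iff₀' hε] at hk

lemma fobs_eq_one {k : ℕ} {x : ℤ} (hk : 1 ≤ k) (hc : cblock k ≤ x) (hd : x ≤ dblock k) :
    fobs x = 1 :=
  if_pos ⟨k, hk, hc, hd⟩

lemma fobs_eq_zero_of_gap {k : ℕ} {x : ℤ} (hd : dblock k < x) (hc : x < cblock (k + 1)) :
    fobs x = 0 := by
  refine if_neg ?_
  rintro ⟨m, -, hcm, hdm⟩
  rcases le_or_gt m k with hmk | hkm
  · exact absurd (hdm.trans (Int.ofNat_le.2 (dblock_mono hmk))) hd.not_ge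
  · exact absurd ((Int.ofNat_le.2 (cblock_mono hkm)).trans hcm) hc.not_ge

lemma fobs_le_one (x : ℤ) : fobs x ≤ 1 := by
  unfold fobs; split <;> norm_num

lemma fobs_nonneg (x : ℤ) : 0 ≤ fobs x := by
  unfold fobs; split <;> norm_num

/-- The empirical mean `ℓ_n(f)` along the path `s`. -/
noncomputable def empMean (s : ℕ → ℤ) (n : ℕ) : ℝ :=
  (1 / (n : ℝ)) * ∑ j ∈ Icc 1 n, fobs (s j)

lemma abs_empMean_sub_one (s : ℕ → ℤ) {n : ℕ} (hn : 0 < n) :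
    |empMean s n - 1| = (∑ j ∈ Icc 1 n, (1 - fobs (s j))) / n := by
  have hn' : (n : ℝ) ≠ 0 := by positivity
  have hsum : ∑ j ∈ Icc 1 n, (1 - fobs (s j)) = n - ∑ j ∈ Icc 1 n, fobs (s j) := by
    simp [sum_sub_distrib]
  rw [hsum, empMean, abs_sub_comm, abs_of_nonneg]
  · field_simp
  · rw [sub_nonneg, one_div_mul_eq_div, div_le_one₀ (by positivity)]
    simpa using sum_le_sum fun j (_ : j ∈ Icc 1 n) => fobs_le_one (s j)

lemma abs_empMean_sub_one_le {s : ℕ → ℤ} {m n : ℕ} (hn : 0 < n) (hmn : m ≤ n)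
    (hs : ∀ j ∈ Ioc m n, fobs (s j) = 1) : |empMean s n - 1| ≤ m / n := by
  rw [abs_empMean_sub_one s hn]
  gcongr
  calc ∑ j ∈ Icc 1 n, (1 - fobs (s j))
      = ∑ j ∈ Icc 1 m, (1 - fobs (s j)) + ∑ j ∈ Ioc m n, (1 - fobs (s j)) := by
        have hsplit : Icc 1 n = Icc 1 m ∪ Ioc m n := by
          ext j; simp only [mem_union, mem_Icc, mem_Ioc]; omega
        rw [hsplit, sum_union (disjoint_left.2 fun j h h' => by
          simp only [mem_Icc, mem_Ioc] at h h'; omega)]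
    _ ≤ ∑ _j ∈ Icc 1 m, (1 : ℝ) + 0 := by
        gcongr with j
        · linarith [fobs_nonneg (s j)]
        · exact (sum_eq_zero fun j hj => by rw [hs j hj, sub_self]).le
    _ = m := by simp

lemma card_div_le_abs_empMean_sub_one {s : ℕ → ℤ} {n : ℕ} (hn : 0 < n) {W : Finset ℕ}
    (hW : W ⊆ Icc 1 n) (hs : ∀ j ∈ W, fobs (s j) = 0) : (#W : ℝ) / n ≤ |empMean s n - 1| := by
  rw [abs_empMean_sub_one s hn]
  gcongr
  calc (#W : ℝ) = ∑ j ∈ W, (1 - fobs (s j)) := by simp [sum_sub_distrib, sum_eq_zero hs]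
    _ ≤ ∑ j ∈ Icc 1 n, (1 - fobs (s j)) :=
        sum_le_sum_of_subset_of_nonneg hW fun j _ _ => by linarith [fobs_le_one (s j)]

lemma le_add_of_step_le_one {s : ℕ → ℤ} (hs : ∀ i, s (i + 1) ≤ s i + 1) {i j : ℕ} (hij : i ≤ j) :
    s j ≤ s i + (j - i : ℕ) := by
  induction j, hij using Nat.le_induction with
  | base => simp
  | succ j hij ih => have := hs j; omega

lemma le_self_of_step_le_one {s : ℕ → ℤ} (hs : ∀ i, s (i + 1) ≤ s i + 1) (hs0 : s 0 = 0)
    (j : ℕ) : s j ≤ j := by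
  simpa [hs0] using le_add_of_step_le_one hs j.zero_le

lemma abs_empMean_dblock_sub_one_le {s : ℕ → ℤ} (hs : ∀ i, s (i + 1) ≤ s i + 1) (hs0 : s 0 = 0)
    {k m : ℕ} (hk : 1 ≤ k) (hm : m ≤ dblock k)
    (hc : ∀ j ∈ Ioc m (dblock k), (cblock k : ℤ) ≤ s j) :
    |empMean s (dblock k) - 1| ≤ m / dblock k :=
  abs_empMean_sub_one_le (dblock_pos k) hm fun j hj => fobs_eq_one hk (hc j hj) <|
    (le_self_of_step_le_one hs hs0 j).trans (by exact_mod_cast (mem_Ioc.1 hj).2)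

/-- Before time `n = c_{k+1}` the path is below `c_{k+1}`, so `f(s_j) = 1` forces `s_j ≤ d_k ≤ εn`.
If `s_n > 3εn`, the path spent its last `⌈εn⌉` steps strictly between `d_k` and `c_{k+1}`,
where `f = 0`. -/
lemma apply_cblock_succ_le_of_abs_empMean_sub_one_lt {s : ℕ → ℤ}
    (hs : ∀ i, s (i + 1) ≤ s i + 1) (hs0 : s 0 = 0) {k : ℕ} (hk : 1 ≤ k) {ε : ℝ}
    (hε : ε ≤ 1 / 2) (hεd : 1 ≤ ε * dblock k)
    (hnear : |empMean s (cblock (k + 1)) - 1| < ε) :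
    (s (cblock (k + 1)) : ℝ) ≤ 3 * ε * cblock (k + 1) := by
  set n := cblock (k + 1)
  set d := dblock k
  have hnd : (n : ℝ) = d ^ 2 := by simp [n, d, cblock_succ hk]
  have hd : (2 : ℝ) ≤ d := by nlinarith
  have hdn : (d : ℝ) ≤ ε * n := by rw [hnd]; nlinarith
  set L := ⌈ε * n⌉₊
  have hL : ε * n ≤ L := Nat.le_ceil _
  have hL' : (L : ℝ) < ε * n + 1 := Nat.ceil_lt_add_one (by linarith)
  have hLn : L < n := by exact_mod_cast (show (L : ℝ) < n by nlinarith)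
  by_contra! hlarge
  have hgap : ∀ j ∈ Ico (n - L) n, fobs (s j) = 0 := by
    intro j hj
    obtain ⟨hj1, hj2⟩ := mem_Ico.1 hj
    have hstep : (s n : ℝ) ≤ s j + L := by
      have h := le_add_of_step_le_one hs hj2.le
      have hnj : n - j ≤ L := by omega
      exact_mod_cast h.trans (by omega)
    refine fobs_eq_zero_of_gap (by exact_mod_cast (show (d : ℝ) < s j by linarith)) ?_
    exact (le_self_of_step_le_one hs hs0 j).trans_lt (by exact_mod_cast hj2)
  have hW : Ico (n - L) n ⊆ Icc 1 n := fun j hj => by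
    simp only [mem_Ico, mem_Icc] at hj ⊢; omega
  have hcard := card_div_le_abs_empMean_sub_one (cblock_pos _) hW hgap
  have hn : (0 : ℝ) < n := by exact_mod_cast cblock_pos _
  rw [Nat.card_Ico, Nat.sub_sub_self hLn.le, div_le_iff₀ hn] at hcard
  linarith [mul_lt_mul_of_pos_right hnear hn]

section Subsequences

variable {u : ℕ → ℝ} {a b : ℝ} {v : ℕ → ℕ}

lemma limsup_eq_of_tendsto_comp (hu : ∀ n, u n ∈ Set.Icc a b) (hv : Tendsto v atTop atTop)
    (h : Tendsto (u ∘ v) atTop (𝓝 b)) : limsup u atTop = b := by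
  have hbdd : IsBoundedUnder (· ≤ ·) atTop u := isBoundedUnder_of ⟨b, fun n => (hu n).2⟩
  refine le_antisymm (limsup_le_of_le (isCoboundedUnder_le_of_le atTop fun n => (hu n).1)
    (Eventually.of_forall fun n => (hu n).2)) ?_
  rw [← h.limsup_eq]
  exact hv.limsup_comp_le_limsup (isCoboundedUnder_le_of_le _ fun n => (hu n).1) hbdd

lemma liminf_le_of_eventually_comp_le (hu : ∀ n, a ≤ u n) (hv : Tendsto v atTop atTop) {c : ℝ}
    (h : ∀ᶠ k in atTop, u (v k) ≤ c) : liminf u atTop ≤ c :=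
  liminf_le_of_frequently_le (hv.frequently h.frequently) (isBoundedUnder_of ⟨a, hu⟩)

end Subsequences

lemma two_mul_sqrt_mul_sqrt_le {a b : ℝ} (ha : 0 ≤ a) (hb : 0 ≤ b) (l : ℝ) :
    2 * √a * √b ≤ a * exp l + b * exp (-l) := by
  have hsq : a * exp l + b * exp (-l) - 2 * √a * √b = (√a * exp l - √b) ^ 2 / exp l := by
    rw [exp_neg]
    field_simp
    rw [sub_sq, mul_pow, sq_sqrt ha, sq_sqrt hb]
    ring
  linarith [show 0 ≤ (√a * exp l - √b) ^ 2 / exp l by positivity]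

lemma mul_exp_add_mul_exp_neg_at_log {a b : ℝ} (ha : 0 < a) (hb : 0 < b) :
    a * exp (log (√b / √a)) + b * exp (-log (√b / √a)) = 2 * √a * √b := by
  rw [exp_neg, exp_log (by positivity), inv_div]
  have ha' : √a ≠ 0 := by positivity
  have hb' : √b ≠ 0 := by positivity
  field_simp
  rw [sq_sqrt ha.le, sq_sqrt hb.le]
  ring

lemma iSup_neg_log_mul_exp_add_mul_exp_neg {a b : ℝ} (ha : 0 < a) (hb : 0 < b) :
    ⨆ l : ℝ, -log (a * exp l + b * exp (-l)) = -log (2 * √a * √b) := by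
  have hle : ∀ l, -log (a * exp l + b * exp (-l)) ≤ -log (2 * √a * √b) := fun l =>
    neg_le_neg (log_le_log (by positivity) (two_mul_sqrt_mul_sqrt_le ha.le hb.le l))
  refine le_antisymm (ciSup_le hle) ?_
  rw [← mul_exp_add_mul_exp_neg_at_log ha hb]
  exact le_ciSup ⟨_, Set.forall_mem_range.2 hle⟩ _

lemma two_mul_sqrt_mul_sqrt_one_sub_lt_one {p : ℝ} (hp0 : 0 ≤ p) (hp1 : p ≤ 1) (hp : p ≠ 1 / 2) :
    2 * √p * √(1 - p) < 1 := by
  have hne : √p - √(1 - p) ≠ 0 := by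
    rw [sub_ne_zero]
    intro h
    have := congrArg (· ^ 2) h
    simp only [sq_sqrt hp0, sq_sqrt (sub_nonneg.2 hp1)] at this
    exact hp (by linarith)
  have := pow_pos (abs_pos.2 hne) 2
  rw [sq_abs, sub_sq, sq_sqrt hp0, sq_sqrt (sub_nonneg.2 hp1)] at this
  linarith

lemma exists_neg_mul_exp_add_mul_exp_neg_eq {p : ℝ} (hp : p ∈ Set.Ioo (1 / 2) 1) :
    ∃ t < 0, p * exp t + (1 - p) * exp (-t) = 2 * √p * √(1 - p) := by
  have hp0 : 0 < p := by linarith [hp.1]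
  have hp1 : 0 < 1 - p := by linarith [hp.2]
  refine ⟨log (√(1 - p) / √p), log_neg (by positivity) ?_, mul_exp_add_mul_exp_neg_at_log hp0 hp1⟩
  exact (div_lt_one (by positivity)).2 (Real.sqrt_lt_sqrt hp1.le (by linarith [hp.1]))

section Walk

variable {Ω : Type*} {X : ℕ → Ω → ℤ}

def walk (X : ℕ → Ω → ℤ) (ω : Ω) (n : ℕ) : ℤ := ∑ i ∈ range n, X i ω

@[simp] lemma walk_zero (ω : Ω) : walk X ω 0 = 0 := sum_range_zero _

lemma walk_succ (ω : Ω) (n : ℕ) : walk X ω (n + 1) = walk X ω n + X n ω := sum_range_succ _ _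

def nearOne (X : ℕ → Ω → ℤ) (ε : ℝ) (n : ℕ) : Set Ω := {ω | |empMean (walk X ω) n - 1| < ε}

abbrev stepSigma (X : ℕ → Ω → ℤ) (S : Set ℕ) : MeasurableSpace Ω :=
  ⨆ i ∈ S, MeasurableSpace.comap (X i) inferInstance

lemma measurable_stepSigma {S : Set ℕ} {i : ℕ} (hi : i ∈ S) : Measurable[stepSigma X S] (X i) :=
  (comap_measurable (X i)).mono (le_iSup₂ (f := fun j (_ : j ∈ S) =>
    MeasurableSpace.comap (X j) inferInstance) i hi) le_rfl

def stayAbove (X : ℕ → Ω → ℤ) (r m N : ℕ) : Set Ω :=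
  ⋂ j ∈ range N, {ω | -(r : ℤ) ≤ ∑ i ∈ Ico m (m + j), X i ω}

lemma measurableSet_stayAbove {mΩ : MeasurableSpace Ω} {r m : ℕ}
    (hX : ∀ i, m ≤ i → Measurable (X i)) (N : ℕ) : MeasurableSet (stayAbove X r m N) :=
  Finset.measurableSet_biInter _ fun _ _ => measurableSet_le measurable_const <|
    Finset.measurable_sum _ fun i hi => hX i (mem_Ico.1 hi).1

-- The steps of the path `0, 1, 2, 1, 2, …`, which never leaves the first block `⟦c₁, d₁⟧ = ⟦1, 2⟧`.
def zigzag : ℕ → ℤ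
  | 0 => 1
  | i + 1 => (-1) ^ i

lemma sum_range_succ_zigzag (j : ℕ) : ∑ i ∈ range (j + 1), zigzag i = if Even j then 1 else 2 := by
  induction j with
  | zero => rfl
  | succ j ih =>
    rw [sum_range_succ, ih]
    rcases Nat.even_or_odd j with h | h
    · simp [zigzag, h, h.neg_one_pow, Nat.even_add_one]
    · simp [zigzag, h.neg_one_pow, Nat.even_add_one, Nat.not_even_iff_odd.2 h]

lemma fobs_sum_range_zigzag {j : ℕ} (hj : 1 ≤ j) : fobs (∑ i ∈ range j, zigzag i) = 1 := by
  obtain ⟨j, rfl⟩ := Nat.exists_eq_add_of_le' hj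
  rw [sum_range_succ_zigzag]
  exact fobs_eq_one le_rfl (by split_ifs <;> decide) (by split_ifs <;> decide)

variable [MeasurableSpace Ω] {P : Measure Ω} {p : ℝ}

noncomputable def ldRate (P : Measure Ω) (X : ℕ → Ω → ℤ) (ε : ℝ) (n : ℕ) : ℝ :=
  1 / (n : ℝ) * log (P.real (nearOne X ε n))

lemma ldRate_nonpos [IsProbabilityMeasure P] (ε : ℝ) (n : ℕ) : ldRate P X ε n ≤ 0 :=
  mul_nonpos_of_nonneg_of_nonpos (by positivity) (log_nonpos measureReal_nonneg measureReal_le_one)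

structure IsSimpleWalkSteps (P : Measure Ω) (p : ℝ) (X : ℕ → Ω → ℤ) : Prop where
  measurable : ∀ i, Measurable (X i)
  indep : iIndepFun X P
  measure_eq_one : ∀ i, P {ω | X i ω = 1} = ENNReal.ofReal p
  measure_eq_neg_one : ∀ i, P {ω | X i ω = -1} = ENNReal.ofReal (1 - p)

namespace IsSimpleWalkSteps

lemma measure_biInter_eq_prod (hX : IsSimpleWalkSteps P p X) (e : ℕ → ℤ) (s : Finset ℕ) :
    P (⋂ i ∈ s, {ω | X i ω = e i}) = ∏ i ∈ s, P {ω | X i ω = e i} :=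
  hX.indep.measure_inter_preimage_eq_mul s (sets := fun i => {e i})
    fun _ _ => measurableSet_singleton _

lemma measureReal_inter_eq_mul (hX : IsSimpleWalkSteps P p X) {S T : Set ℕ}
    (hST : Disjoint S T) {A B : Set Ω} (hA : MeasurableSet[stepSigma X S] A)
    (hB : MeasurableSet[stepSigma X T] B) : P.real (A ∩ B) = P.real A * P.real B := by
  have hindep := indep_iSup_of_disjoint (fun i => (hX.measurable i).comap_le) hX.indep.iIndep hST
  rw [measureReal_def, (Indep_iff _ _ P).1 hindep A B hA hB, ENNReal.toReal_mul]
  rfl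

lemma one_sub_le_measureReal (hX : IsSimpleWalkSteps P p X)
    (hp : p ∈ Set.Icc (1 / 2) 1) {e : ℤ} (he : e = 1 ∨ e = -1) (i : ℕ) :
    1 - p ≤ P.real {ω | X i ω = e} := by
  rcases he with rfl | rfl
  · rw [measureReal_def, hX.measure_eq_one, ENNReal.toReal_ofReal (by linarith [hp.1])]
    linarith [hp.1]
  · rw [measureReal_def, hX.measure_eq_neg_one, ENNReal.toReal_ofReal (by linarith [hp.2])]

variable [IsProbabilityMeasure P]

lemma ae_eq_one_or_eq_neg_one (hX : IsSimpleWalkSteps P p X) (hp : p ∈ Set.Icc 0 1) (i : ℕ) :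
    ∀ᵐ ω ∂P, X i ω = 1 ∨ X i ω = -1 := by
  have hdisj : Disjoint {ω | X i ω = 1} {ω | X i ω = -1} :=
    Set.disjoint_left.2 fun ω h h' => by simp_all
  have hunion : P ({ω | X i ω = 1} ∪ {ω | X i ω = -1}) = 1 := by
    rw [measure_union hdisj (hX.measurable i (measurableSet_singleton _)), hX.measure_eq_one,
      hX.measure_eq_neg_one, ← ENNReal.ofReal_add hp.1 (sub_nonneg.2 hp.2), add_sub_cancel,
      ENNReal.ofReal_one]
  exact mem_ae_iff.2 ((prob_compl_eq_zero_iff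
    ((hX.measurable i (measurableSet_singleton _)).union
      (hX.measurable i (measurableSet_singleton _)))).2 hunion)

lemma ae_walk_succ_le (hX : IsSimpleWalkSteps P p X) (hp : p ∈ Set.Icc 0 1) :
    ∀ᵐ ω ∂P, ∀ i, walk X ω (i + 1) ≤ walk X ω i + 1 := by
  filter_upwards [ae_all_iff.2 (hX.ae_eq_one_or_eq_neg_one hp)] with ω hω i
  rw [walk_succ]
  rcases hω i with h | h <;> omega

lemma mgf_step (hX : IsSimpleWalkSteps P p X) (hp : p ∈ Set.Icc 0 1) (i : ℕ) (t : ℝ) :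
    mgf (fun ω => (X i ω : ℝ)) P t = p * exp t + (1 - p) * exp (-t) := by
  have hm1 : MeasurableSet {ω | X i ω = 1} := hX.measurable i (measurableSet_singleton 1)
  have hm2 : MeasurableSet {ω | X i ω = -1} := hX.measurable i (measurableSet_singleton (-1))
  have hcongr : (fun ω => exp (t * X i ω)) =ᵐ[P] fun ω =>
      {ω | X i ω = 1}.indicator (fun _ => exp t) ω +
        {ω | X i ω = -1}.indicator (fun _ => exp (-t)) ω := by
    filter_upwards [hX.ae_eq_one_or_eq_neg_one hp i] with ω hω
    rcases hω with h | h <;> simp [Set.indicator, h]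
  rw [mgf, integral_congr_ae hcongr, integral_add ((integrable_const _).indicator hm1)
      ((integrable_const _).indicator hm2), integral_indicator_const _ hm1,
    integral_indicator_const _ hm2, measureReal_def, measureReal_def, hX.measure_eq_one,
    hX.measure_eq_neg_one, ENNReal.toReal_ofReal hp.1, ENNReal.toReal_ofReal (sub_nonneg.2 hp.2),
    smul_eq_mul, smul_eq_mul, mul_comm p, mul_comm (1 - p)]

lemma measureReal_sum_le_le (hX : IsSimpleWalkSteps P p X) (hp : p ∈ Set.Icc 0 1) (s : Finset ℕ)
    (a : ℝ) {t : ℝ} (ht : t ≤ 0) :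
    P.real {ω | ((∑ i ∈ s, X i ω : ℤ) : ℝ) ≤ a} ≤
      exp (-t * a) * (p * exp t + (1 - p) * exp (-t)) ^ #s := by
  have hindep : iIndepFun (fun i ω => (X i ω : ℝ)) P :=
    hX.indep.comp (fun _ => Int.cast) fun _ => measurable_from_top
  have hmgf : mgf (fun ω => ((∑ i ∈ s, X i ω : ℤ) : ℝ)) P t =
      (p * exp t + (1 - p) * exp (-t)) ^ #s := by
    have := hindep.mgf_sum (fun i => measurable_from_top.comp (hX.measurable i)) s (t := t)
    simp only [Int.cast_sum]
    rw [← Finset.sum_fn, this, prod_congr rfl fun i _ => hX.mgf_step hp i t, prod_const]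
  have hpos : 0 < p * exp t + (1 - p) * exp (-t) := by
    rcases hp.1.eq_or_lt with rfl | hp0
    · simp [exp_pos]
    · have := sub_nonneg.2 hp.2; positivity
  rw [← hmgf]
  exact measure_le_le_exp_mul_mgf a ht (mgf_pos_iff.1 (hmgf ▸ pow_pos hpos _))

lemma one_sub_pow_le_measureReal_nearOne (hX : IsSimpleWalkSteps P p X)
    (hp : p ∈ Set.Icc (1 / 2) 1) {ε : ℝ} (hε : 0 < ε) {n : ℕ} (hn : 1 ≤ n) :
    (1 - p) ^ n ≤ P.real (nearOne X ε n) := by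
  have hsub : ⋂ i ∈ range n, {ω | X i ω = zigzag i} ⊆ nearOne X ε n := by
    intro ω hω
    simp only [Set.mem_iInter, Set.mem_ofPred_eq] at hω
    have hpath : ∀ j ∈ Ioc 0 n, fobs (walk X ω j) = 1 := fun j hj => by
      rw [walk, sum_congr rfl fun i hi => hω i (mem_range.2 ((mem_range.1 hi).trans_le
        (mem_Ioc.1 hj).2))]
      exact fobs_sum_range_zigzag (mem_Ioc.1 hj).1
    have := abs_empMean_sub_one_le hn n.zero_le hpath
    simp only [CharP.cast_eq_zero, zero_div] at this
    exact this.trans_lt hε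
  have hstep : ∀ i, zigzag i = 1 ∨ zigzag i = -1 := by
    rintro (_ | i)
    · exact Or.inl rfl
    · exact (neg_one_pow_eq_or ℤ i).imp id id
  calc (1 - p) ^ n = ∏ _i ∈ range n, (1 - p) := by rw [prod_const, card_range]
    _ ≤ ∏ i ∈ range n, P.real {ω | X i ω = zigzag i} :=
        prod_le_prod (fun _ _ => by linarith [hp.2]) fun i _ =>
          hX.one_sub_le_measureReal hp (hstep i) i
    _ = P.real (⋂ i ∈ range n, {ω | X i ω = zigzag i}) := by
        simp only [measureReal_def, hX.measure_biInter_eq_prod, ENNReal.toReal_prod]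
    _ ≤ P.real (nearOne X ε n) := measureReal_mono hsub

lemma log_one_sub_le_ldRate (hX : IsSimpleWalkSteps P p X) (hp : p ∈ Set.Ico (1 / 2) 1)
    {ε : ℝ} (hε : 0 < ε) (n : ℕ) :
    log (1 - p) ≤ ldRate P X ε n := by
  have hlog : log (1 - p) ≤ 0 := log_nonpos (by linarith [hp.2]) (by linarith [hp.1])
  rcases Nat.eq_zero_or_pos n with rfl | hn
  · simpa [ldRate] using hlog
  have hn' : (0 : ℝ) < n := by exact_mod_cast hn
  rw [ldRate, one_div, le_inv_mul_iff₀ hn', ← log_pow]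
  exact log_le_log (pow_pos (by linarith [hp.2]) n)
    (hX.one_sub_pow_le_measureReal_nearOne ⟨hp.1, hp.2.le⟩ hε hn)

/-- A walk with positive drift stays above a low enough level with probability at least `1/2`:
the Chernoff bounds for the events `{∑_{m ≤ i < m+j} X_i < -r}` decay geometrically in `j`
and, after summation, exponentially in `r`. -/
lemma exists_half_le_measureReal_stayAbove (hX : IsSimpleWalkSteps P p X)
    (hp : p ∈ Set.Ioo (1 / 2) 1) :
    ∃ r : ℕ, ∀ m N, 1 / 2 ≤ P.real (stayAbove X r m N) := by
  have hp0 : 0 < p := by linarith [hp.1]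
  have hp1 : 0 < 1 - p := by linarith [hp.2]
  obtain ⟨t, ht, hgt⟩ := exists_neg_mul_exp_add_mul_exp_neg_eq hp
  set q := 2 * √p * √(1 - p)
  have hq0 : 0 < q := by positivity
  have hq1 : q < 1 := two_mul_sqrt_mul_sqrt_one_sub_lt_one hp0.le hp.2.le hp.1.ne'
  obtain ⟨r, hr⟩ := ((tendsto_pow_atTop_nhds_zero_of_lt_one (exp_pos t).le
    (exp_lt_one_iff.2 ht)).eventually
      (ge_mem_nhds (by linarith : 0 < (1 - q) / 2))).exists_forall_of_atTop
  refine ⟨r, fun m N => ?_⟩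
  have hgeom : ∑ j ∈ range N, q ^ j ≤ (1 - q)⁻¹ := by
    simpa [← Finset.range_eq_Ico] using geom_sum_Ico_le_of_lt_one (m := 0) (n := N) hq0.le hq1
  have hbad : (stayAbove X r m N)ᶜ ⊆ ⋃ j ∈ range N,
      {ω | ((∑ i ∈ Ico m (m + j), X i ω : ℤ) : ℝ) ≤ -((r + 1 : ℕ) : ℝ)} := by
    intro ω hω
    simp only [stayAbove, Set.compl_iInter, Set.mem_iUnion, Set.mem_compl_iff,
      Set.mem_ofPred_eq, not_le] at hω ⊢
    obtain ⟨j, hj, hlt⟩ := hω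
    exact ⟨j, hj, by exact_mod_cast (by omega : _ ≤ -((r + 1 : ℕ) : ℤ))⟩
  have hcompl : P.real (stayAbove X r m N)ᶜ ≤ 1 / 2 := calc
    _ ≤ ∑ j ∈ range N,
        P.real {ω | ((∑ i ∈ Ico m (m + j), X i ω : ℤ) : ℝ) ≤ -((r + 1 : ℕ) : ℝ)} :=
      (measureReal_mono hbad (measure_ne_top _ _)).trans (measureReal_biUnion_finset_le _ _)
    _ ≤ ∑ j ∈ range N, exp t ^ (r + 1) * q ^ j := by
      gcongr with j
      refine (hX.measureReal_sum_le_le ⟨hp0.le, hp.2.le⟩ _ _ ht.le).trans_eq ?_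
      rw [hgt, Nat.card_Ico, Nat.add_sub_cancel_left, ← exp_nat_mul]
      ring_nf
    _ ≤ (1 - q) / 2 * (1 - q)⁻¹ := by
      rw [← mul_sum]
      exact mul_le_mul (hr (r + 1) (by omega)) hgeom
        (sum_nonneg fun j _ => by positivity) (by linarith)
    _ = 1 / 2 := by field_simp [(by linarith : 1 - q ≠ 0)]
  rw [probReal_compl_eq_one_sub (measurableSet_stayAbove (fun i _ => hX.measurable i) N)] at hcompl
  linarith

lemma measureReal_nearOne_dblock_ge (hX : IsSimpleWalkSteps P p X)
    (hp : p ∈ Set.Icc 0 1) {r : ℕ} (hr : ∀ m N, 1 / 2 ≤ P.real (stayAbove X r m N)) {k : ℕ}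
    (hk : 1 ≤ k) (hm : cblock k + r ≤ dblock k) {ε : ℝ} (hε : (cblock k + r : ℕ) < ε * dblock k) :
    p ^ (cblock k + r) / 2 ≤ P.real (nearOne X ε (dblock k)) := by
  set m := cblock k + r
  set n := dblock k
  set A := ⋂ i ∈ range m, {ω | X i ω = 1}
  set B := stayAbove X r m (n - m + 1)
  have hA : P.real A = p ^ m := by
    rw [measureReal_def, hX.measure_biInter_eq_prod, prod_congr rfl fun i _ => hX.measure_eq_one i,
      prod_const, card_range, ENNReal.toReal_pow, ENNReal.toReal_ofReal hp.1]
  have hAB : P.real (A ∩ B) = P.real A * P.real B := by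
    refine hX.measureReal_inter_eq_mul (S := Set.Iio m) (T := Set.Ici m)
      (Set.Iio_disjoint_Ici le_rfl) ?_ (measurableSet_stayAbove (fun i hi =>
        measurable_stepSigma (Set.mem_Ici.2 hi)) _)
    exact Finset.measurableSet_biInter _ fun i hi =>
      measurable_stepSigma (Set.mem_Iio.2 (mem_range.1 hi)) (measurableSet_singleton 1)
  have hsub : (A ∩ B : Set Ω) ≤ᵐ[P] nearOne X ε n := by
    filter_upwards [hX.ae_walk_succ_le hp] with ω hstep ⟨hωA, hωB⟩
    simp only [A, B, stayAbove, Set.mem_iInter, Set.mem_ofPred_eq] at hωA hωB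
    have hwalk_m : walk X ω m = m := by
      simp [walk, sum_congr rfl fun i hi => hωA i hi]
    refine (abs_empMean_dblock_sub_one_le hstep (walk_zero ω) hk hm fun j hj => ?_).trans_lt
      ((div_lt_iff₀ (by exact_mod_cast dblock_pos k)).2 hε)
    obtain ⟨hmj, hjn⟩ := mem_Ioc.1 hj
    have hsplit := sum_range_add_sum_Ico (fun i => X i ω) (m := m) (n := j) hmj.le
    have hstay := hωB (j - m) (mem_range.2 (by omega))
    rw [Nat.add_sub_cancel' hmj.le] at hstay
    change walk X ω m + _ = walk X ω j at hsplit
    have hmr : (m : ℤ) = cblock k + r := Nat.cast_add _ _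
    omega
  calc p ^ m / 2 ≤ P.real A * P.real B := by
        rw [hA, div_eq_mul_one_div]
        exact mul_le_mul_of_nonneg_left (hr m _) (pow_nonneg hp.1 m)
    _ = P.real (A ∩ B) := hAB.symm
    _ ≤ P.real (nearOne X ε n) := ENNReal.toReal_mono (measure_ne_top _ _) (measure_mono_ae hsub)

lemma tendsto_ldRate_dblock (hX : IsSimpleWalkSteps P p X)
    (hp : p ∈ Set.Ioo (1 / 2) 1) {ε : ℝ} (hε : 0 < ε) :
    Tendsto (fun k => ldRate P X ε (dblock k)) atTop (𝓝 0) := by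
  obtain ⟨r, hr⟩ := hX.exists_half_le_measureReal_stayAbove hp
  have hp0 : 0 < p := by linarith [hp.1]
  set g : ℕ → ℝ := fun k =>
    log p * (1 / ((k : ℝ) + 1) + r * (1 / dblock k)) - log 2 * (1 / dblock k)
  have hinv : Tendsto (fun k => 1 / (dblock k : ℝ)) atTop (𝓝 0) :=
    tendsto_one_div_atTop_nhds_zero_nat.comp tendsto_dblock_atTop
  have hg : Tendsto g atTop (𝓝 0) := by
    simpa only [mul_zero, add_zero, sub_zero] using
      ((tendsto_one_div_add_atTop_nhds_zero_nat.add (hinv.const_mul (r : ℝ))).const_mul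
        (log p)).sub (hinv.const_mul (log 2))
  have hev : ∀ᶠ k in atTop, g k ≤ ldRate P X ε (dblock k) := by
    filter_upwards [eventually_ge_atTop (max 1 r),
      tendsto_natCast_atTop_atTop.eventually_gt_atTop ((1 + r) / ε)] with k hk hkε
    have hc : (1 : ℝ) ≤ cblock k := by exact_mod_cast cblock_pos k
    have hd : (dblock k : ℝ) = (k + 1) * cblock k := by simp [dblock]
    have hrk : (r : ℝ) ≤ k := by exact_mod_cast le_of_max_le_right hk
    have hm : cblock k + r ≤ dblock k := by
      have : (cblock k + r : ℝ) ≤ dblock k := by rw [hd]; nlinarith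
      exact_mod_cast this
    have hεm : ((cblock k + r : ℕ) : ℝ) < ε * dblock k := by
      rw [div_lt_iff₀ hε] at hkε
      push_cast
      rw [hd]
      nlinarith
    have hlow := hX.measureReal_nearOne_dblock_ge ⟨hp0.le, hp.2.le⟩ hr
      (le_of_max_le_left hk) hm hεm
    calc g k = 1 / dblock k * log (p ^ (cblock k + r) / 2) := by
          rw [log_div (by positivity) two_ne_zero, log_pow]
          simp only [g, hd]
          field_simp
          push_cast
          ring
      _ ≤ ldRate P X ε (dblock k) :=
          mul_le_mul_of_nonneg_left (log_le_log (by positivity) hlow) (by positivity)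
  exact tendsto_of_tendsto_of_tendsto_of_le_of_le' hg tendsto_const_nhds hev
    (Eventually.of_forall fun k => ldRate_nonpos _ _)

lemma ldRate_cblock_le (hX : IsSimpleWalkSteps P p X)
    (hp : p ∈ Set.Ico (1 / 2) 1) {k : ℕ} (hk : 1 ≤ k) {ε : ℝ} (hε0 : 0 < ε) (hε : ε ≤ 1 / 2)
    (hεd : 1 ≤ ε * dblock k) {t : ℝ} (ht : t ≤ 0) :
    ldRate P X ε (cblock (k + 1)) ≤ -t * (3 * ε) + log (p * exp t + (1 - p) * exp (-t)) := by
  set n := cblock (k + 1)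
  have hp' : p ∈ Set.Icc 0 1 := ⟨by linarith [hp.1], hp.2.le⟩
  have hn : (0 : ℝ) < n := by exact_mod_cast cblock_pos _
  have hsub : nearOne X ε n ≤ᵐ[P] {ω | ((∑ i ∈ range n, X i ω : ℤ) : ℝ) ≤ 3 * ε * n} := by
    filter_upwards [hX.ae_walk_succ_le hp'] with ω hstep hnear
    exact apply_cblock_succ_le_of_abs_empMean_sub_one_lt hstep (walk_zero ω) hk hε hεd hnear
  have hle := (ENNReal.toReal_mono (measure_ne_top _ _) (measure_mono_ae hsub)).trans
    (hX.measureReal_sum_le_le hp' (range n) _ ht)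
  have hpos : 0 < P.real (nearOne X ε n) :=
    (pow_pos (by linarith [hp.2]) n).trans_le
      (hX.one_sub_pow_le_measureReal_nearOne ⟨hp.1, hp.2.le⟩ hε0 (cblock_pos _))
  have hg : 0 < p * exp t + (1 - p) * exp (-t) := by
    have := sub_pos.2 hp.2; have := hp'.1; positivity
  rw [card_range] at hle
  calc ldRate P X ε n
        ≤ 1 / n * log (exp (-t * (3 * ε * n)) * (p * exp t + (1 - p) * exp (-t)) ^ n) :=
        mul_le_mul_of_nonneg_left (log_le_log hpos hle) (by positivity)
    _ = -t * (3 * ε) + log (p * exp t + (1 - p) * exp (-t)) := by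
        rw [log_mul (exp_pos _).ne' (pow_pos hg n).ne', log_exp, log_pow]
        field_simp

lemma liminf_ldRate_le (hX : IsSimpleWalkSteps P p X)
    (hp : p ∈ Set.Ico (1 / 2) 1) {ε : ℝ} (hε0 : 0 < ε) (hε : ε ≤ 1 / 2) {t : ℝ} (ht : t ≤ 0) :
    liminf (ldRate P X ε) atTop ≤ -t * (3 * ε) + log (p * exp t + (1 - p) * exp (-t)) := by
  refine liminf_le_of_eventually_comp_le (hX.log_one_sub_le_ldRate hp hε0)
    tendsto_cblock_succ_atTop ?_
  filter_upwards [eventually_ge_atTop 1, eventually_one_le_mul_dblock hε0] with k hk hεd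
  exact hX.ldRate_cblock_le hp hk hε0 hε hεd ht

lemma iInf_liminf_ldRate_le (hX : IsSimpleWalkSteps P p X)
    (hp : p ∈ Set.Ioo (1 / 2) 1) :
    ⨅ ε : {e : ℝ // 0 < e}, liminf (ldRate P X ε.1) atTop ≤ log (2 * √p * √(1 - p)) := by
  have hp' : p ∈ Set.Ico (1 / 2) 1 := ⟨hp.1.le, hp.2⟩
  have hbdd : BddBelow (Set.range fun ε : {e : ℝ // 0 < e} => liminf (ldRate P X ε.1) atTop) :=
    ⟨log (1 - p), Set.forall_mem_range.2 fun ε => le_liminf_of_le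
      (isCoboundedUnder_ge_of_le atTop fun n => ldRate_nonpos ε.1 n)
      (Eventually.of_forall (hX.log_one_sub_le_ldRate hp' ε.2))⟩
  obtain ⟨t, ht, hgt⟩ := exists_neg_mul_exp_add_mul_exp_neg_eq hp
  have hlim : Tendsto (fun ε => -t * (3 * ε) + log (2 * √p * √(1 - p))) (𝓝[>] 0)
      (𝓝 (log (2 * √p * √(1 - p)))) :=
    tendsto_nhdsWithin_of_tendsto_nhds <|
      (by fun_prop : Continuous fun ε : ℝ => -t * (3 * ε) + log (2 * √p * √(1 - p))).tendsto' 0 _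
        (by simp)
  refine ge_of_tendsto hlim ?_
  filter_upwards [Ioo_mem_nhdsGT (by norm_num : (0 : ℝ) < 1 / 2)] with ε hε
  rw [← hgt]
  exact (ciInf_le hbdd ⟨ε, hε.1⟩).trans (hX.liminf_ldRate_le hp' hε.1 hε.2.le ht.le)

end IsSimpleWalkSteps

end Walk

/-- No full LDP for the empirical means of the bounded observable `f` along the drifted
simple random walk: the `ε → 0⁺` limit of the `lim sup` rates is `0`, while the `ε → 0⁺`
limit of the `lim inf` rates is at most `−Λ*(0) < 0`. -/
theorem no_LDP_for_bounded_observable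
    {Ω : Type*} [MeasurableSpace Ω] (P : Measure Ω) [IsProbabilityMeasure P]
    (pb : ℝ) (hpb : pb ∈ Set.Ioo (0 : ℝ) 1) (hpb2 : 1 / 2 < pb)
    (X : ℕ → Ω → ℤ) (hmeas : ∀ i, Measurable (X i))
    (hindep : ProbabilityTheory.iIndepFun X P)
    (hdist : ∀ i, P {ω | X i ω = 1} = ENNReal.ofReal pb ∧
      P {ω | X i ω = -1} = ENNReal.ofReal (1 - pb)) :
    (⨅ ε : {e : ℝ // 0 < e}, atTop.limsup (fun n : ℕ => (1 / (n : ℝ)) *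
        Real.log (P {ω | |(1 / (n : ℝ)) *
          (∑ j ∈ Finset.Icc 1 n, fobs (∑ i ∈ Finset.range j, X i ω)) - 1|
            < ε.1}).toReal)) = 0 ∧
    (⨅ ε : {e : ℝ // 0 < e}, atTop.liminf (fun n : ℕ => (1 / (n : ℝ)) *
        Real.log (P {ω | |(1 / (n : ℝ)) *
          (∑ j ∈ Finset.Icc 1 n, fobs (∑ i ∈ Finset.range j, X i ω)) - 1|
            < ε.1}).toReal))
      ≤ -(⨆ l : ℝ, -(Real.log (pb * Real.exp l + (1 - pb) * Real.exp (-l)))) ∧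
    0 < ⨆ l : ℝ, -(Real.log (pb * Real.exp l + (1 - pb) * Real.exp (-l))) := by
  have hX : IsSimpleWalkSteps P pb X :=
    ⟨hmeas, hindep, fun i => (hdist i).1, fun i => (hdist i).2⟩
  have hp : pb ∈ Set.Ioo (1 / 2) 1 := ⟨hpb2, hpb.2⟩
  have hlimsup (ε : {e : ℝ // 0 < e}) : limsup (ldRate P X ε.1) atTop = 0 :=
    limsup_eq_of_tendsto_comp
      (fun n => ⟨hX.log_one_sub_le_ldRate ⟨hpb2.le, hpb.2⟩ ε.2 n, ldRate_nonpos ε.1 n⟩)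
      tendsto_dblock_atTop (hX.tendsto_ldRate_dblock hp ε.2)
  rw [iSup_neg_log_mul_exp_add_mul_exp_neg hpb.1 (sub_pos.2 hpb.2), neg_neg]
  refine ⟨(iInf_congr hlimsup).trans ciInf_const, hX.iInf_liminf_ldRate_le hp, ?_⟩
  exact neg_pos.2 (Real.log_neg (by have := hpb.1; have := sub_pos.2 hpb.2; positivity)
    (two_mul_sqrt_mul_sqrt_one_sub_lt_one hpb.1.le hpb.2.le hpb2.ne'))
end
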